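/- Let R be a commutative ring, fix positive integers a_1,…,a_k and b_1,…,b_l and a positive integer c. Let f be a formal power series over R in variables X_1,…,X_k, Y_1,…,Y_l that is supported on S(a,b,c) (i.e. f is homogeneous of degree c when X_i has degree a_i and Y_j has degree −b_j). Then there exist formal power series g_m over R, indexed by the (finitely many) elements m = (I,J) of M(a,b,c), each supported on S(a,b) (i.e. homogeneous of degree 0), such that f = Σ_{(I,J) ∈ M(a,b,c)} X^I Y^J · g_{(I,J)}. -/

import Mathlib

open Finset

/-- The weighted degree `a·p - b·q` of a pair of exponent vectors. -/
def degSum {k l : ℕ} (a : Fin k → ℕ) (b : Fin l → ℕ)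
    (x : (Fin k → ℕ) × (Fin l → ℕ)) : ℤ :=
  (∑ i, (a i : ℤ) * x.1 i) - ∑ j, (b j : ℤ) * x.2 j

/-- A pair of exponent vectors as a finitely supported function on `Fin k ⊕ Fin l`. -/
noncomputable def toExp {k l : ℕ} (m : (Fin k → ℕ) × (Fin l → ℕ)) : (Fin k ⊕ Fin l) →₀ ℕ :=
  Finsupp.equivFunOnFinite.symm (Sum.elim m.1 m.2)

/-- The pair of exponent vectors of a finitely supported function on `Fin k ⊕ Fin l`. -/
def fromExp {k l : ℕ} (d : (Fin k ⊕ Fin l) →₀ ℕ) : (Fin k → ℕ) × (Fin l → ℕ) :=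
  (fun i => d (Sum.inl i), fun j => d (Sum.inr j))

/-- A multivariate formal power series in the variables `X₁,…,X_k, Y₁,…,Y_l` is
supported on `T ⊆ ℕ^k × ℕ^l` if every exponent vector with nonzero coefficient
belongs to `T`. -/
def SupportedOn {k l : ℕ} {R : Type*} [CommRing R]
    (f : MvPowerSeries (Fin k ⊕ Fin l) R) (T : Set ((Fin k → ℕ) × (Fin l → ℕ))) : Prop :=
  ∀ d : (Fin k ⊕ Fin l) →₀ ℕ, MvPowerSeries.coeff d f ≠ 0 → fromExp d ∈ T

section Aux

variable {k l : ℕ} (a : Fin k → ℕ) (b : Fin l → ℕ)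

lemma toExp_coe (m : (Fin k → ℕ) × (Fin l → ℕ)) : ⇑(toExp m) = Sum.elim m.1 m.2 :=
  Finsupp.equivFunOnFinite.apply_symm_apply _

lemma toExp_apply_inl (m : (Fin k → ℕ) × (Fin l → ℕ)) (i : Fin k) :
    toExp m (Sum.inl i) = m.1 i := by rw [toExp_coe]; rfl

lemma toExp_apply_inr (m : (Fin k → ℕ) × (Fin l → ℕ)) (j : Fin l) :
    toExp m (Sum.inr j) = m.2 j := by rw [toExp_coe]; rfl

lemma degSum_add (x y : (Fin k → ℕ) × (Fin l → ℕ)) :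
    degSum a b (x + y) = degSum a b x + degSum a b y := by
  simp only [degSum, Prod.fst_add, Prod.snd_add, Pi.add_apply, Nat.cast_add, mul_add,
    Finset.sum_add_distrib]
  ring

lemma toExp_le_iff (m : (Fin k → ℕ) × (Fin l → ℕ)) (d : (Fin k ⊕ Fin l) →₀ ℕ) :
    toExp m ≤ d ↔ m ≤ fromExp d := by
  rw [Finsupp.le_def]
  constructor
  · intro h
    exact ⟨fun i => by simpa [toExp_apply_inl, fromExp] using h (Sum.inl i),
           fun j => by simpa [toExp_apply_inr, fromExp] using h (Sum.inr j)⟩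
  · rintro ⟨h1, h2⟩ (i | j)
    · simpa [toExp_apply_inl, fromExp] using h1 i
    · simpa [toExp_apply_inr, fromExp] using h2 j

lemma fromExp_sub_add {m : (Fin k → ℕ) × (Fin l → ℕ)} {d : (Fin k ⊕ Fin l) →₀ ℕ}
    (h : toExp m ≤ d) : fromExp (d - toExp m) + m = fromExp d := by
  rw [Finsupp.le_def] at h
  refine Prod.ext (funext fun i => ?_) (funext fun j => ?_)
  · have := h (Sum.inl i)
    simp only [fromExp, Prod.fst_add, Pi.add_apply, Finsupp.tsub_apply, toExp_apply_inl] at *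
    omega
  · have := h (Sum.inr j)
    simp only [fromExp, Prod.snd_add, Pi.add_apply, Finsupp.tsub_apply, toExp_apply_inr] at *
    omega

lemma exists_minimal :
    ∀ n (x : (Fin k → ℕ) × (Fin l → ℕ)), (∑ i, x.1 i + ∑ j, x.2 j) = n →
      ∃ m, m ≤ x ∧ degSum a b m = degSum a b x ∧
        ∀ y, degSum a b y = degSum a b x → y ≤ m → y = m := by
  intro n
  induction n using Nat.strong_induction_on with
  | _ n ih =>
    intro x hx
    by_cases hmin : ∀ y, degSum a b y = degSum a b x → y ≤ x → y = x
    · exact ⟨x, le_refl x, rfl, hmin⟩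
    · push_neg at hmin
      obtain ⟨y, hdy, hyx, hne⟩ := hmin
      have h1 : ∀ i, y.1 i ≤ x.1 i := fun i => hyx.1 i
      have h2 : ∀ j, y.2 j ≤ x.2 j := fun j => hyx.2 j
      have hlt : (∑ i, y.1 i + ∑ j, y.2 j) < n := by
        subst hx
        have hstrict : (∃ i, y.1 i < x.1 i) ∨ ∃ j, y.2 j < x.2 j := by
          by_contra hcon
          push_neg at hcon
          exact hne (Prod.ext (funext fun i => le_antisymm (h1 i) (hcon.1 i))
            (funext fun j => le_antisymm (h2 j) (hcon.2 j)))
        rcases hstrict with ⟨i, hi⟩ | ⟨j, hj⟩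
        · exact add_lt_add_of_lt_of_le
            (Finset.sum_lt_sum (fun i _ => h1 i) ⟨i, Finset.mem_univ i, hi⟩)
            (Finset.sum_le_sum fun j _ => h2 j)
        · exact add_lt_add_of_le_of_lt (Finset.sum_le_sum fun i _ => h1 i)
            (Finset.sum_lt_sum (fun j _ => h2 j) ⟨j, Finset.mem_univ j, hj⟩)
      obtain ⟨m, hm1, hm2, hm3⟩ := ih _ hlt y rfl
      exact ⟨m, le_trans hm1 hyx, hm2.trans hdy,
        fun z hz hzm => hm3 z (by rw [hz, hdy]) hzm⟩

end Aux

/-- A formal power series homogeneous of degree `c` (i.e. supported on `S(a,b,c)`,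
where `Xᵢ` has degree `aᵢ` and `Yⱼ` has degree `−bⱼ`) decomposes as a finite sum
`f = Σ_{(I,J) ∈ M(a,b,c)} X^I Y^J · g_{(I,J)}` where each `g_{(I,J)}` is supported
on `S(a,b)`, i.e. is homogeneous of degree `0`. -/
theorem homogeneous_series_decomposition
    (R : Type*) [CommRing R]
    (k l : ℕ) (a : Fin k → ℕ) (b : Fin l → ℕ)
    (ha : ∀ i, 0 < a i) (hb : ∀ j, 0 < b j) (c : ℤ) (hc : 0 < c)
    (f : MvPowerSeries (Fin k ⊕ Fin l) R)
    (hf : SupportedOn f {x : (Fin k → ℕ) × (Fin l → ℕ) | degSum a b x = c}) :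
    ∃ g : ((Fin k → ℕ) × (Fin l → ℕ)) → MvPowerSeries (Fin k ⊕ Fin l) R,
      (∀ m : (Fin k → ℕ) × (Fin l → ℕ),
        m ∉ {x : (Fin k → ℕ) × (Fin l → ℕ) |
              degSum a b x = c ∧
              ∀ y : (Fin k → ℕ) × (Fin l → ℕ), degSum a b y = c → y ≤ x → y = x} →
        g m = 0) ∧
      (∀ m : (Fin k → ℕ) × (Fin l → ℕ),
        SupportedOn (g m) {x : (Fin k → ℕ) × (Fin l → ℕ) | degSum a b x = 0}) ∧
      f = ∑ᶠ m : (Fin k → ℕ) × (Fin l → ℕ),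
            (MvPowerSeries.monomial (toExp m) (1 : R)) * g m := by
  classical
  set Min : Set ((Fin k → ℕ) × (Fin l → ℕ)) :=
    {x | degSum a b x = c ∧ ∀ y, degSum a b y = c → y ≤ x → y = x} with hMin
  -- choice of a minimal element below every point
  have hμex : ∀ x : (Fin k → ℕ) × (Fin l → ℕ),
      ∃ m, m ≤ x ∧ degSum a b m = degSum a b x ∧
        ∀ y, degSum a b y = degSum a b x → y ≤ m → y = m :=
    fun x => exists_minimal a b _ x rfl
  set μ : ((Fin k → ℕ) × (Fin l → ℕ)) → ((Fin k → ℕ) × (Fin l → ℕ)) :=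
    fun x => (hμex x).choose with hμ
  have hμle : ∀ x, μ x ≤ x := fun x => (hμex x).choose_spec.1
  have hμdeg : ∀ x, degSum a b (μ x) = degSum a b x := fun x => (hμex x).choose_spec.2.1
  have hμmin : ∀ x, ∀ y, degSum a b y = degSum a b x → y ≤ μ x → y = μ x :=
    fun x => (hμex x).choose_spec.2.2
  have hμMem : ∀ x, degSum a b x = c → μ x ∈ Min := by
    intro x hx
    exact ⟨(hμdeg x).trans hx, fun y hy => hμmin x y (hy.trans hx.symm)⟩
  -- the series g
  set g : ((Fin k → ℕ) × (Fin l → ℕ)) → MvPowerSeries (Fin k ⊕ Fin l) R :=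
    fun m d =>
      if degSum a b (fromExp d) = 0 ∧ degSum a b m = c ∧ μ (fromExp d + m) = m
      then MvPowerSeries.coeff (d + toExp m) f else 0 with hgdef
  have hgcoeff : ∀ m d, MvPowerSeries.coeff d (g m) =
      if degSum a b (fromExp d) = 0 ∧ degSum a b m = c ∧ μ (fromExp d + m) = m
      then MvPowerSeries.coeff (d + toExp m) f else 0 := fun m d => rfl
  have hgMin : ∀ m, g m ≠ 0 → m ∈ Min := by
    intro m hm
    have : ∃ d, MvPowerSeries.coeff d (g m) ≠ 0 := by
      by_contra hcon
      push_neg at hcon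
      exact hm (MvPowerSeries.ext fun d => by rw [hcon d, map_zero])
    obtain ⟨d, hd⟩ := this
    rw [hgcoeff] at hd
    by_cases hcond : degSum a b (fromExp d) = 0 ∧ degSum a b m = c ∧ μ (fromExp d + m) = m
    · obtain ⟨h0, hmc, hμm⟩ := hcond
      have : degSum a b (fromExp d + m) = c := by rw [degSum_add, h0, hmc, zero_add]
      rw [← hμm]
      exact hμMem _ this
    · rw [if_neg hcond] at hd; exact absurd rfl hd
  -- finiteness of the set of minimal elements (Dickson's lemma)
  have hMinFin : Min.Finite := by
    set ι : ((Fin k → ℕ) × (Fin l → ℕ)) → (Fin k ⊕ Fin l → ℕ) :=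
      fun x => Sum.elim x.1 x.2 with hι
    have hmono : ∀ x y, ι x ≤ ι y ↔ x ≤ y := by
      intro x y
      constructor
      · intro h
        exact ⟨fun i => h (Sum.inl i), fun j => h (Sum.inr j)⟩
      · rintro h (i | j)
        · exact h.1 i
        · exact h.2 j
    have hinj : Function.Injective ι := by
      intro x y hxy
      refine Prod.ext (funext fun i => ?_) (funext fun j => ?_)
      · exact congrFun hxy (Sum.inl i)
      · exact congrFun hxy (Sum.inr j)
    have hanti : IsAntichain (· ≤ ·) (ι '' Min) := by
      rintro _ ⟨x, hx, rfl⟩ _ ⟨y, hy, rfl⟩ hne hle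
      exact hne (congrArg ι (hy.2 x hx.1 ((hmono x y).1 hle)))
    exact Set.Finite.of_finite_image
      (hanti.finite_of_partiallyWellOrderedOn
        (Set.isPWO_of_wellQuasiOrderedLE (ι '' Min))) hinj.injOn
  -- support of the summand family
  set F : ((Fin k → ℕ) × (Fin l → ℕ)) → MvPowerSeries (Fin k ⊕ Fin l) R :=
    fun m => (MvPowerSeries.monomial (toExp m) (1 : R)) * g m with hF
  have hFsupp : Function.support F ⊆ ↑hMinFin.toFinset := by
    intro m hm
    rw [Set.Finite.coe_toFinset]
    refine hgMin m fun h0 => hm ?_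
    rw [hF]
    simp only [h0, MulZeroClass.mul_zero]
  refine ⟨g, ?_, ?_, ?_⟩
  · intro m hm
    by_contra hne
    exact hm (hgMin m hne)
  · intro m d hd
    rw [hgcoeff] at hd
    by_cases hcond : degSum a b (fromExp d) = 0 ∧ degSum a b m = c ∧ μ (fromExp d + m) = m
    · exact hcond.1
    · rw [if_neg hcond] at hd; exact absurd rfl hd
  · rw [finsum_eq_sum_of_support_subset F hFsupp]
    refine MvPowerSeries.ext fun d => ?_
    rw [map_sum]
    by_cases hd : degSum a b (fromExp d) = c
    · -- the only surviving term is m₀ = μ (fromExp d)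
      set m₀ := μ (fromExp d) with hm₀
      have hm₀Min : m₀ ∈ Min := hμMem _ hd
      have hm₀le : toExp m₀ ≤ d := (toExp_le_iff m₀ d).2 (hμle _)
      have hkey : fromExp (d - toExp m₀) + m₀ = fromExp d := fromExp_sub_add hm₀le
      have hdeg0 : degSum a b (fromExp (d - toExp m₀)) = 0 := by
        have := congrArg (degSum a b) hkey
        rw [degSum_add, hd, hm₀Min.1] at this
        linarith
      rw [Finset.sum_eq_single m₀]
      · rw [hF, MvPowerSeries.coeff_monomial_mul, if_pos hm₀le, one_mul, hgcoeff,
          if_pos ⟨hdeg0, hm₀Min.1, by rw [hkey]⟩, tsub_add_cancel_of_le hm₀le]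
      · intro m _ hne
        rw [hF, MvPowerSeries.coeff_monomial_mul]
        by_cases hle : toExp m ≤ d
        · rw [if_pos hle, one_mul, hgcoeff]
          rw [if_neg]
          rintro ⟨h0, hmc, hμm⟩
          rw [fromExp_sub_add hle] at hμm
          exact hne hμm.symm
        · rw [if_neg hle]
      · intro habs
        exact absurd (hMinFin.mem_toFinset.2 hm₀Min) habs
    · -- all terms vanish and so does the coefficient of f
      have hf0 : MvPowerSeries.coeff d f = 0 := by
        by_contra h
        exact hd (hf d h)
      rw [hf0]
      refine (Finset.sum_eq_zero fun m hm => ?_).symm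
      have hmMin : m ∈ Min := hMinFin.mem_toFinset.1 hm
      rw [hF, MvPowerSeries.coeff_monomial_mul]
      by_cases hle : toExp m ≤ d
      · rw [if_pos hle, one_mul, hgcoeff]
        rw [if_neg]
        rintro ⟨h0, hmc, -⟩
        apply hd
        rw [← fromExp_sub_add hle, degSum_add, h0, hmc, zero_add]
      · rw [if_neg hle]
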